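/- Let X be a Noetherian integral scheme, H a fixed line bundle with finite-dimensional space of global sections V = H⁰(X, H ⊗ O_X), and let (I_n)_{n ≥ 0} be a descending chain of coherent ideal sheaves on X such that each I_n ⊗ H is globally generated. Then the chain (I_n) stabilizes. -/

import Mathlib

/-!
The global sections of `H` that factor through `J n` form a descending chain of subspaces of the
finite-dimensional space `Hom(𝒪_X, H)`, so they stabilize. A globally generated subsheaf is
recovered from these sections: its generating map from a free sheaf is an epimorphism, hence a
strong one in the abelian category of sheaves of modules, and therefore lifts through every
subsheaf that contains the images of the generators.
-/

open AlgebraicGeometry CategoryTheory CategoryTheory.Limits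

/-- `X.Modules` is a plain `def`, so instance search does not see through it to the additive
structure on morphisms of `SheafOfModules X.ringCatSheaf`. -/
noncomputable instance instAddCommGroupUnitHomModules (X : Scheme) (H : X.Modules) :
    AddCommGroup (SheafOfModules.unit X.ringCatSheaf ⟶ H) :=
  SheafOfModules.instAddCommGroupHom X.ringCatSheaf (SheafOfModules.unit X.ringCatSheaf)
    (H : SheafOfModules X.ringCatSheaf)

namespace CategoryTheory.Subobject

variable {C : Type*} [Category C]

theorem le_of_factors_comp_of_strongEpi {H P : C} {A B : Subobject H} (p : P ⟶ (A : C))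
    [StrongEpi p] (h : B.Factors (p ≫ A.arrow)) : A ≤ B :=
  have sq : CommSq (B.factorThru _ h) p B.arrow A.arrow := ⟨by simp⟩
  le_of_comm sq.lift sq.fac_right

theorem factors_of_factors_sigma_ι {ι : Type*} {F : ι → C} [HasCoproduct F] {H : C}
    {B : Subobject H} {f : ∐ F ⟶ H} (h : ∀ i, B.Factors (Limits.Sigma.ι F i ≫ f)) :
    B.Factors f :=
  (factors_iff _ _).mpr ⟨Limits.Sigma.desc fun i => B.factorThru _ (h i),
    Limits.Sigma.hom_ext _ _ fun i => by simp⟩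

section Preadditive

variable [Preadditive C] {U H : C} (k : Type*) [Semiring k] [Module k (U ⟶ H)]
  (hk : ∀ c : k, ∃ u : U ⟶ U, ∀ f : U ⟶ H, c • f = u ≫ f)

/-- For `U = 𝒪_X` and `A = I ⊗ H` this is `H⁰(X, I ⊗ H) ⊆ H⁰(X, H)`. -/
def factorsSubmodule (A : Subobject H) : Submodule k (U ⟶ H) where
  carrier := {f | A.Factors f}
  zero_mem' := factors_zero
  add_mem' := factors_add _ _
  smul_mem' c f hf := by
    obtain ⟨u, hu⟩ := hk c
    show A.Factors (c • f)
    rw [hu]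
    exact factors_of_factors_right u hf

theorem factorsSubmodule_mono : Monotone (factorsSubmodule k hk) :=
  fun _ _ h f => factors_of_le f h

end Preadditive

end CategoryTheory.Subobject

namespace SheafOfModules.GeneratingSections

universe u

variable {C : Type*} [Category C] {J : GrothendieckTopology C} {R : Sheaf J RingCat.{u}}
  [HasSheafify J AddCommGrpCat.{u}] [J.WEqualsLocallyBijective AddCommGrpCat.{u}]

theorem subobject_le_of_factors {H : SheafOfModules R} {A B : Subobject H}
    (σ : (A : SheafOfModules R).GeneratingSections)
    (h : ∀ f : unit R ⟶ H, A.Factors f → B.Factors f) : A ≤ B := by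
  have := σ.epi
  have := strongEpi_of_epi σ.π
  exact Subobject.le_of_factors_comp_of_strongEpi σ.π
    (Subobject.factors_of_factors_sigma_ι fun _ =>
      h _ (Subobject.factors_of_factors_right _ (Subobject.factors_comp_arrow σ.π)))

end SheafOfModules.GeneratingSections

theorem descending_chain_of_globally_generated_subsheaves_stabilizes_general
    (X : Scheme)
    (H : X.Modules)
    (k : Type*) [Field k]
    [Module k (SheafOfModules.unit X.ringCatSheaf ⟶ H)]
    [FiniteDimensional k (SheafOfModules.unit X.ringCatSheaf ⟶ H)]
    (hk : ∀ c : k, ∃ u : SheafOfModules.unit X.ringCatSheaf ⟶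
        SheafOfModules.unit X.ringCatSheaf,
      ∀ f : SheafOfModules.unit X.ringCatSheaf ⟶ H, c • f = u ≫ f)
    (J : ℕ → Subobject H)
    (hdesc : ∀ n, J (n + 1) ≤ J n)
    (hgg : ∀ n, Nonempty ((Subobject.underlying.obj (J n)).GeneratingSections)) :
    ∃ n₀, ∀ n, n₀ ≤ n → J n = J n₀ := by
  have hJ : Antitone J := antitone_nat_of_succ_le hdesc
  let sections : ℕ →o (Submodule k (SheafOfModules.unit X.ringCatSheaf ⟶ H))ᵒᵈ :=
    ⟨fun n => OrderDual.toDual (Subobject.factorsSubmodule k hk (J n)),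
      fun _ _ h => Subobject.factorsSubmodule_mono k hk (hJ h)⟩
  obtain ⟨n₀, hn₀⟩ := IsArtinian.monotone_stabilizes sections
  refine ⟨n₀, fun n hn => le_antisymm (hJ hn) ?_⟩
  obtain ⟨σ⟩ := hgg n₀
  exact σ.subobject_le_of_factors fun f hf =>
    (SetLike.ext_iff.mp (congrArg OrderDual.ofDual (hn₀ n hn)) f).mp hf

/-- **Stabilization of descending chains of globally generated twisted ideal
sheaves** (the abstract stabilization lemma).

Let `X` be a Noetherian integral scheme and `H` a line bundle on `X` whose
space of global sections `V = H⁰(X, H) = Hom(𝒪_X, H)` is a finite-dimensional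
vector space over a field `k` (the `k`-action being induced by scalars in
`Γ(X, 𝒪_X)`, i.e. factoring through endomorphisms of the structure sheaf).
A descending chain of coherent ideal sheaves `I_n` with each `I_n ⊗ H`
globally generated corresponds, via `J_n := I_n·H ⊆ H` (`H` being invertible),
to a descending chain `J : ℕ → Subobject H` of subsheaves of `H`, each
globally generated (i.e. generated by its global sections).  Then the chain
`(J_n)` — equivalently, the chain `(I_n)` — stabilizes. -/
theorem descending_chain_of_globally_generated_subsheaves_stabilizes
    (X : Scheme) [IsIntegral X] [AlgebraicGeometry.IsNoetherian X]
    (H : X.Modules)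
    (k : Type*) [Field k]
    [Module k (SheafOfModules.unit X.ringCatSheaf ⟶ H)]
    [FiniteDimensional k (SheafOfModules.unit X.ringCatSheaf ⟶ H)]
    (hk : ∀ c : k, ∃ u : SheafOfModules.unit X.ringCatSheaf ⟶
        SheafOfModules.unit X.ringCatSheaf,
      ∀ f : SheafOfModules.unit X.ringCatSheaf ⟶ H, c • f = u ≫ f)
    (J : ℕ → Subobject H)
    (hdesc : ∀ n, J (n + 1) ≤ J n)
    (hgg : ∀ n, Nonempty ((Subobject.underlying.obj (J n)).GeneratingSections)) :
    ∃ n₀, ∀ n, n₀ ≤ n → J n = J n₀ :=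
  descending_chain_of_globally_generated_subsheaves_stabilizes_general X H k hk J hdesc hgg
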